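/- Let n ≥ 1 and let A : V → End(V) be a linear map with Ω(A(X)Y,Z) totally symmetric in (X,Y,Z) and A(X)∘A(Y) = 0 for all X,Y ∈ V. Define ψ^A : V → V by ψ^A(x) = x − ½·A(x)x. Then: (1) ψ^{−A} ∘ ψ^A = id_V and ψ^A ∘ ψ^{−A} = id_V, so ψ^A is a bijection; (2) the Fréchet derivative of ψ^A at x is Dψ^A(x) : X ↦ X − A(x)X; (3) ψ^A is a symplectomorphism: Ω(Dψ^A(x)X, Dψ^A(x)Y) = Ω(X,Y) for all x,X,Y; and (4) t ↦ ψ^{tA} is a one-parameter group: ψ^{sA} ∘ ψ^{tA} = ψ^{(s+t)A} for all s,t ∈ ℝ. -/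

import Mathlib

/-! Since `A` is symmetric (by nondegeneracy of `Ω`) and all products `A(X)A(Y)`, `A(A(X)Y)`
vanish, the quadratic term is invariant: `A(y)y = A(x)x` for `y = x - t·A(x)x`. Hence
`ψ^{sA} ∘ ψ^{tA} = ψ^{(s+t)A}`, and `s = -t = ±1` gives the two inverse identities.
The differential `1 - T` with `T = A(x)` preserves `Ω` because `T` is `Ω`-skew and `T² = 0`:
`Ω((1-T)X, (1-T)Y) = Ω(X,Y) - Ω(X, T²Y)`. -/

noncomputable section

/-- The standard symplectic form on `ℝ^{2n}`. -/
def Omega (n : ℕ) (x y : Fin (2*n) → ℝ) : ℝ :=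
  ∑ i : Fin n, (x ⟨i.1, by have := i.isLt; omega⟩ * y ⟨n + i.1, by have := i.isLt; omega⟩
    - x ⟨n + i.1, by have := i.isLt; omega⟩ * y ⟨i.1, by have := i.isLt; omega⟩)

/-- The map `ψ^A(x) = x − ½·A(x)x` associated to a linear `A : V → End(V)`. -/
def psiMap (n : ℕ)
    (A : (Fin (2*n) → ℝ) →ₗ[ℝ] (Fin (2*n) → ℝ) →ₗ[ℝ] (Fin (2*n) → ℝ))
    (x : Fin (2*n) → ℝ) : Fin (2*n) → ℝ :=
  x - (1/2 : ℝ) • A x x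

open LinearMap (BilinForm)

theorem sub_smul_apply_self_sub_smul_apply_self {R V : Type*} [CommRing R] [AddCommGroup V]
    [Module R V] (B : V →ₗ[R] V →ₗ[R] V) (hl : ∀ X Y Z, B X (B Y Z) = 0)
    (hr : ∀ X Y Z, B (B X Y) Z = 0) (s t : R) (x : V) :
    (x - t • B x x) - s • B (x - t • B x x) (x - t • B x x) = x - (s + t) • B x x := by
  simp only [map_sub, map_smul, LinearMap.sub_apply, LinearMap.smul_apply, hl, hr, smul_zero,
    sub_zero]
  module

theorem LinearMap.BilinForm.apply_sub_apply_sub_of_isSkewAdjoint {R M : Type*} [CommRing R]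
    [AddCommGroup M] [Module R M] (B : BilinForm R M) {T : M → M} (hT : B.IsSkewAdjoint T)
    (hT2 : ∀ X, T (T X) = 0) (X Y : M) : B (X - T X) (Y - T Y) = B X Y := by
  have hTX : ∀ Y, B (T X) Y = -B X (T Y) := fun Y => by rw [hT X Y, Pi.neg_apply, map_neg]
  simp only [map_sub, LinearMap.sub_apply, hTX, hT2, map_zero]
  ring

theorem ContinuousLinearMap.hasFDerivAt_apply_self {𝕜 E F : Type*} [NontriviallyNormedField 𝕜]
    [NormedAddCommGroup E] [NormedSpace 𝕜 E] [NormedAddCommGroup F] [NormedSpace 𝕜 F]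
    (B : E →L[𝕜] E →L[𝕜] F) (x : E) : HasFDerivAt (fun y => B y y) (B x + B.flip x) x := by
  simpa using B.hasFDerivAt.clm_apply (hasFDerivAt_id x)

section Symplectic

variable (n : ℕ)

def symplecticForm : BilinForm ℝ (Fin (2*n) → ℝ) :=
  LinearMap.mk₂ ℝ (Omega n)
    (fun _ _ _ => by simp only [Omega, Pi.add_apply, ← Finset.sum_add_distrib]; congr 1; ext; ring)
    (fun _ _ _ => by
      simp only [Omega, Pi.smul_apply, smul_eq_mul, Finset.mul_sum]; congr 1; ext; ring)
    (fun _ _ _ => by simp only [Omega, Pi.add_apply, ← Finset.sum_add_distrib]; congr 1; ext; ring)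
    (fun _ _ _ => by
      simp only [Omega, Pi.smul_apply, smul_eq_mul, Finset.mul_sum]; congr 1; ext; ring)

@[simp] theorem symplecticForm_apply (x y : Fin (2*n) → ℝ) : symplecticForm n x y = Omega n x y :=
  rfl

theorem symplecticForm_isAlt : (symplecticForm n).IsAlt := fun x => by
  simp only [symplecticForm_apply, Omega]
  exact Finset.sum_eq_zero fun i _ => by ring

def standardComplexStructure (v : Fin (2*n) → ℝ) : Fin (2*n) → ℝ := fun j =>
  if h : j.1 < n then -v ⟨n + j.1, by omega⟩ else v ⟨j.1 - n, by omega⟩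

theorem Omega_standardComplexStructure (v : Fin (2*n) → ℝ) :
    Omega n v (standardComplexStructure n v) = ∑ j, v j ^ 2 := by
  rw [← Fin.sum_congr' _ (two_mul n).symm, Fin.sum_univ_add, ← Finset.sum_add_distrib, Omega]
  refine Finset.sum_congr rfl fun i _ => ?_
  have hlow : standardComplexStructure n v ⟨i.1, by omega⟩ = -v ⟨n + i.1, by omega⟩ :=
    dif_pos i.isLt
  have hhigh : standardComplexStructure n v ⟨n + i.1, by omega⟩ = v ⟨i.1, by omega⟩ := by
    simp [standardComplexStructure]
  rw [hlow, hhigh]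
  simp only [Fin.cast, Fin.val_castAdd, Fin.val_natAdd]
  ring

theorem symplecticForm_separatingLeft : (symplecticForm n).SeparatingLeft := by
  intro v hv
  have hsq : ∑ j, v j ^ 2 = 0 := by
    rw [← Omega_standardComplexStructure, ← symplecticForm_apply, hv]
  funext j
  exact pow_eq_zero_iff two_ne_zero |>.mp
    ((Finset.sum_eq_zero_iff_of_nonneg fun j _ => sq_nonneg (v j)).mp hsq j (Finset.mem_univ j))

end Symplectic

section Psi

variable {n : ℕ} (A : (Fin (2*n) → ℝ) →ₗ[ℝ] (Fin (2*n) → ℝ) →ₗ[ℝ] (Fin (2*n) → ℝ))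

@[simp] theorem psiMap_zero (x : Fin (2*n) → ℝ) : psiMap n 0 x = x := by
  simp [psiMap]

theorem psiMap_smul (c : ℝ) (x : Fin (2*n) → ℝ) : psiMap n (c • A) x = x - (c / 2) • A x x := by
  simp only [psiMap, LinearMap.smul_apply, smul_smul]
  ring_nf

theorem psiMap_smul_psiMap_smul (hl : ∀ X Y Z, A X (A Y Z) = 0)
    (hr : ∀ X Y Z, A (A X Y) Z = 0) (s t : ℝ) (x : Fin (2*n) → ℝ) :
    psiMap n (s • A) (psiMap n (t • A) x) = psiMap n ((s + t) • A) x := by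
  rw [psiMap_smul, psiMap_smul, psiMap_smul, sub_smul_apply_self_sub_smul_apply_self A hl hr,
    add_div]

theorem fderiv_psiMap_apply (hA : ∀ u v, A u v = A v u) (x X : Fin (2*n) → ℝ) :
    fderiv ℝ (psiMap n A) x X = X - A x X := by
  let B : (Fin (2*n) → ℝ) →L[ℝ] (Fin (2*n) → ℝ) →L[ℝ] (Fin (2*n) → ℝ) :=
    LinearMap.toContinuousLinearMap (LinearMap.toContinuousLinearMap.toLinearMap ∘ₗ A)
  have hψ : HasFDerivAt (psiMap n A)
      (ContinuousLinearMap.id ℝ _ - (1 / 2 : ℝ) • (B x + B.flip x)) x :=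
    (hasFDerivAt_id x).sub ((B.hasFDerivAt_apply_self x).const_smul (1 / 2 : ℝ))
  rw [hψ.fderiv]
  simp [B, hA X x]
  module

end Psi

theorem psiA_symplectomorphism_general (n : ℕ)
    (A : (Fin (2*n) → ℝ) →ₗ[ℝ] (Fin (2*n) → ℝ) →ₗ[ℝ] (Fin (2*n) → ℝ))
    (hsym₁ : ∀ X Y Z, Omega n (A X Y) Z = Omega n (A Y X) Z)
    (hsym₂ : ∀ X Y Z, Omega n (A X Y) Z = Omega n (A X Z) Y)
    (hnil : ∀ X Y Z, A X (A Y Z) = 0) :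
    (∀ x, psiMap n (-A) (psiMap n A x) = x) ∧
    (∀ x, psiMap n A (psiMap n (-A) x) = x) ∧
    Function.Bijective (psiMap n A) ∧
    (∀ x X, fderiv ℝ (psiMap n A) x X = X - A x X) ∧
    (∀ x X Y, Omega n (fderiv ℝ (psiMap n A) x X) (fderiv ℝ (psiMap n A) x Y) =
      Omega n X Y) ∧
    (∀ (s t : ℝ) (x : Fin (2*n) → ℝ),
      psiMap n (s • A) (psiMap n (t • A) x) = psiMap n ((s + t) • A) x) := by
  have hsymm : ∀ u v, A u v = A v u := fun u v => sub_eq_zero.mp <|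
    symplecticForm_separatingLeft n _ fun Z => by
      simp only [map_sub, LinearMap.sub_apply, symplecticForm_apply, hsym₁ u v Z, sub_self]
  have hr : ∀ X Y Z, A (A X Y) Z = 0 := fun X Y Z => by rw [hsymm]; exact hnil Z X Y
  have hleft : ∀ x, psiMap n (-A) (psiMap n A x) = x := by
    simpa [neg_one_smul ℝ A] using psiMap_smul_psiMap_smul A hnil hr (-1) 1
  have hright : ∀ x, psiMap n A (psiMap n (-A) x) = x := by
    simpa [neg_one_smul ℝ A] using psiMap_smul_psiMap_smul A hnil hr 1 (-1)
  have hskew : ∀ x, (symplecticForm n).IsSkewAdjoint (A x) := fun x X Y =>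
    calc symplecticForm n (A x X) Y = symplecticForm n (A x Y) X := hsym₂ x X Y
      _ = -symplecticForm n X (A x Y) := (LinearMap.IsAlt.neg (symplecticForm_isAlt n) _ _).symm
      _ = symplecticForm n X (-A x Y) := (map_neg _ _).symm
  refine ⟨hleft, hright, Function.bijective_iff_has_inverse.mpr ⟨_, hleft, hright⟩,
    fderiv_psiMap_apply A hsymm, fun x X Y => ?_, psiMap_smul_psiMap_smul A hnil hr⟩
  simp only [fderiv_psiMap_apply A hsymm, ← symplecticForm_apply]
  exact (symplecticForm n).apply_sub_apply_sub_of_isSkewAdjoint (hskew x) (hnil x x) X Y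

/-- For linear `A : V → End(V)` with `Ω(A(X)Y,Z)` totally symmetric and
`A(X)∘A(Y) = 0`, the map `ψ^A(x) = x − ½A(x)x` is a bijection with inverse `ψ^{−A}`, has
derivative `X ↦ X − A(x)X`, is a symplectomorphism, and `t ↦ ψ^{tA}` is a one-parameter
group. -/
theorem psiA_symplectomorphism (n : ℕ) (hn : 1 ≤ n)
    (A : (Fin (2*n) → ℝ) →ₗ[ℝ] (Fin (2*n) → ℝ) →ₗ[ℝ] (Fin (2*n) → ℝ))
    (hsym₁ : ∀ X Y Z, Omega n (A X Y) Z = Omega n (A Y X) Z)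
    (hsym₂ : ∀ X Y Z, Omega n (A X Y) Z = Omega n (A X Z) Y)
    (hnil : ∀ X Y Z, A X (A Y Z) = 0) :
    (∀ x, psiMap n (-A) (psiMap n A x) = x) ∧
    (∀ x, psiMap n A (psiMap n (-A) x) = x) ∧
    Function.Bijective (psiMap n A) ∧
    (∀ x X, fderiv ℝ (psiMap n A) x X = X - A x X) ∧
    (∀ x X Y, Omega n (fderiv ℝ (psiMap n A) x X) (fderiv ℝ (psiMap n A) x Y) =
      Omega n X Y) ∧
    (∀ (s t : ℝ) (x : Fin (2*n) → ℝ),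
      psiMap n (s • A) (psiMap n (t • A) x) = psiMap n ((s + t) • A) x) :=
  psiA_symplectomorphism_general n A hsym₁ hsym₂ hnil
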